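/- arXiv:1412.3068 — 2 statements merged into one kernel-verified Lean document; each statement's English description precedes it below -/
import Mathlib

section
/- Let L be a Lie algebra of a set-arrangement 𝒜 on X satisfying the replacement condition, and let ℬ be a closed sub-arrangement of 𝒜 such that there is no A ∈ 𝒜 with |A| = 2 and |A ∩ supp(ℬ)| = 1. Then ker(π_ℬ) equals the Lie subalgebra of L generated by the images of the generators in X \ supp(ℬ). -/
/-! Let `H` be the subalgebra of `L` generated by the generators outside `supp ℬ`. For
`x ∉ supp ℬ` and `a ∈ supp ℬ`, either `⁅a, x⁆ = 0`, or `a` and `x` lie in a member `A ∉ ℬ` with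
`A ∩ supp ℬ = {a}`, which has at least three elements by the hypothesis on two-element members;
the replacement condition then puts `⁅a, x⁆` in the subalgebra generated by `A \ {a}`, which
lies outside `supp ℬ`. Hence `H` is an ideal. Since `ℬ` is closed, the inclusion `supp ℬ ⊆ X`
induces a Lie algebra map `σ : L_ℬ → L`, and `σ ∘ π_ℬ` agrees with the identity modulo `H` on
generators, hence everywhere. So `ker π_ℬ ⊆ H`; the other inclusion is clear. -/

open FreeLieAlgebra

/-- A set-arrangement on `X`: every member has at least two elements, two distinct members
meet in at most one element, and the union of all members is `X`. -/
def IsSetArrangement {X : Type*} (𝒜 : Set (Set X)) : Prop :=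
  (∀ A ∈ 𝒜, 2 ≤ A.ncard) ∧
    (∀ A ∈ 𝒜, ∀ B ∈ 𝒜, A ≠ B → (A ∩ B).Subsingleton) ∧
    ⋃₀ 𝒜 = Set.univ

variable (C : Type*) [CommRing C] {X : Type*}

/-- The inclusion `F(A) → F(X)` of free Lie algebras. -/
noncomputable def inclX (A : Set X) : FreeLieAlgebra C A →ₗ⁅C⁆ FreeLieAlgebra C X :=
  FreeLieAlgebra.lift C fun a => FreeLieAlgebra.of C (a : X)

/-- The inclusion `F(A) → F(S)` of free Lie algebras along `A ⊆ S`. -/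
noncomputable def inclSub {A S : Set X} (h : A ⊆ S) :
    FreeLieAlgebra C A →ₗ⁅C⁆ FreeLieAlgebra C S :=
  FreeLieAlgebra.lift C fun a => FreeLieAlgebra.of C (⟨a.1, h a.2⟩ : S)

/-- Admissibility of the relations: `R_A ⊆ [F(A), F(A)]`. -/
def AdmissibleRel (𝒜 : Set (Set X)) (Rel : ∀ A : Set X, Set (FreeLieAlgebra C A)) : Prop :=
  ∀ A ∈ 𝒜, Rel A ⊆ (LieAlgebra.derivedSeries C (FreeLieAlgebra C A) 1 : Set (FreeLieAlgebra C A))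

/-- The defining ideal of a Lie algebra of a set-arrangement: generated by all `⁅x,y⁆` for
pairs not contained in any member of `𝒜`, together with the relations `R_A`, `A ∈ 𝒜`. -/
noncomputable def definingIdeal (𝒜 : Set (Set X)) (Rel : ∀ A : Set X, Set (FreeLieAlgebra C A)) :
    LieIdeal C (FreeLieAlgebra C X) :=
  LieSubmodule.lieSpan C (FreeLieAlgebra C X)
    ({z | ∃ x y : X, (∀ A ∈ 𝒜, ¬({x, y} : Set X) ⊆ A) ∧ z = ⁅of C x, of C y⁆} ∪
      ⋃ A, ⋃ (_ : A ∈ 𝒜), inclX C A '' Rel A)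

/-- The Lie algebra `L` of the set-arrangement `𝒜` with relations `Rel`. -/
noncomputable abbrev ArrLie (𝒜 : Set (Set X)) (Rel : ∀ A : Set X, Set (FreeLieAlgebra C A)) :=
  FreeLieAlgebra C X ⧸ definingIdeal C 𝒜 Rel

/-- The quotient map `F(X) → L`. -/
noncomputable def arrMk (𝒜 : Set (Set X)) (Rel : ∀ A : Set X, Set (FreeLieAlgebra C A)) :
    FreeLieAlgebra C X → ArrLie C 𝒜 Rel :=
  LieSubmodule.Quotient.mk (N := definingIdeal C 𝒜 Rel)

/-- The ideal `⟨R_A⟩` of `F(A)`. -/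
noncomputable def locIdeal (A : Set X) (Rel : ∀ A : Set X, Set (FreeLieAlgebra C A)) :
    LieIdeal C (FreeLieAlgebra C A) :=
  LieSubmodule.lieSpan C (FreeLieAlgebra C A) (Rel A)

/-- The localized Lie algebra `L_A = F(A)/⟨R_A⟩`. -/
noncomputable abbrev LocLie (A : Set X) (Rel : ∀ A : Set X, Set (FreeLieAlgebra C A)) :=
  FreeLieAlgebra C A ⧸ locIdeal C A Rel

/-- The quotient map `F(A) → L_A`. -/
noncomputable def locMk (A : Set X) (Rel : ∀ A : Set X, Set (FreeLieAlgebra C A)) :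
    FreeLieAlgebra C A → LocLie C A Rel :=
  LieSubmodule.Quotient.mk (N := locIdeal C A Rel)

open Classical in
/-- The canonical Lie algebra map `F(X) → L_A` killing the generators outside `A`. -/
noncomputable def locProj (A : Set X) (Rel : ∀ A : Set X, Set (FreeLieAlgebra C A)) :
    FreeLieAlgebra C X →ₗ⁅C⁆ LocLie C A Rel :=
  FreeLieAlgebra.lift C fun x : X =>
    if h : x ∈ A then locMk C A Rel (of C (⟨x, h⟩ : A)) else 0

/-- The replacement condition. -/
def ReplacementCond (𝒜 : Set (Set X)) (Rel : ∀ A : Set X, Set (FreeLieAlgebra C A)) : Prop :=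
  ∀ A ∈ 𝒜, 3 ≤ A.ncard → ∀ x ∈ A, (∃ B ∈ 𝒜, B ≠ A ∧ x ∈ B) →
    (LieAlgebra.derivedSeries C (LocLie C A Rel) 1 : Set (LocLie C A Rel)) ⊆
      (LieSubalgebra.lieSpan C (LocLie C A Rel)
        {z | ∃ a : A, (a : X) ≠ x ∧ z = locMk C A Rel (of C a)} : Set (LocLie C A Rel))

/-- Lie monomials of weight `n` with respect to a weighting `d` of the generators. -/
inductive IsLieMonomial (d : X → ℕ) : FreeLieAlgebra C X → ℕ → Prop
  | of (x : X) : IsLieMonomial d (of C x) (d x)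
  | lie {u v : FreeLieAlgebra C X} {m n : ℕ} :
      IsLieMonomial d u m → IsLieMonomial d v n → IsLieMonomial d ⁅u, v⁆ (m + n)

/-- Homogeneity of an element of the free Lie algebra with respect to a weighting. -/
def IsHomogeneous (d : X → ℕ) (r : FreeLieAlgebra C X) : Prop :=
  ∃ n : ℕ, r ∈ Submodule.span C {u | IsLieMonomial C d u n}

/-- The support of a sub-arrangement. -/
def arrSupp {X : Type*} (ℬ : Set (Set X)) : Set X := ⋃₀ ℬ

/-- `ℬ` is a closed sub-arrangement of `𝒜`. -/
def IsClosedSub {X : Type*} (𝒜 ℬ : Set (Set X)) : Prop :=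
  ℬ ⊆ 𝒜 ∧ ∀ A ∈ 𝒜, A ∉ ℬ → (A ∩ arrSupp ℬ).Subsingleton

/-- The relations `R_ℬ` of a sub-arrangement. -/
noncomputable def subRel (ℬ : Set (Set X)) (Rel : ∀ A : Set X, Set (FreeLieAlgebra C A)) :
    Set (FreeLieAlgebra C (arrSupp ℬ)) :=
  (⋃ B, ⋃ h : B ∈ ℬ, inclSub C (Set.subset_sUnion_of_mem h) '' Rel B) ∪
    {z | ∃ x y : arrSupp ℬ, (∀ B ∈ ℬ, ¬({(x : X), (y : X)} : Set X) ⊆ B) ∧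
      z = ⁅of C x, of C y⁆}

/-- The ideal `⟨R_ℬ⟩` of `F(supp ℬ)`. -/
noncomputable def subIdeal (ℬ : Set (Set X)) (Rel : ∀ A : Set X, Set (FreeLieAlgebra C A)) :
    LieIdeal C (FreeLieAlgebra C (arrSupp ℬ)) :=
  LieSubmodule.lieSpan C (FreeLieAlgebra C (arrSupp ℬ)) (subRel C ℬ Rel)

/-- The localized Lie algebra `L_ℬ` at a sub-arrangement. -/
noncomputable abbrev SubLie (ℬ : Set (Set X)) (Rel : ∀ A : Set X, Set (FreeLieAlgebra C A)) :=
  FreeLieAlgebra C (arrSupp ℬ) ⧸ subIdeal C ℬ Rel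

/-- The quotient map `F(supp ℬ) → L_ℬ`. -/
noncomputable def subMk (ℬ : Set (Set X)) (Rel : ∀ A : Set X, Set (FreeLieAlgebra C A)) :
    FreeLieAlgebra C (arrSupp ℬ) → SubLie C ℬ Rel :=
  LieSubmodule.Quotient.mk (N := subIdeal C ℬ Rel)

open Classical in
/-- The canonical Lie algebra map `F(X) → L_ℬ` killing the generators outside `supp ℬ`. -/
noncomputable def subProj (ℬ : Set (Set X)) (Rel : ∀ A : Set X, Set (FreeLieAlgebra C A)) :
    FreeLieAlgebra C X →ₗ⁅C⁆ SubLie C ℬ Rel :=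
  FreeLieAlgebra.lift C fun x : X =>
    if h : x ∈ arrSupp ℬ then subMk C ℬ Rel (of C (⟨x, h⟩ : arrSupp ℬ)) else 0

namespace LieIdeal

variable {R L M : Type*} [CommRing R] [LieRing L] [LieAlgebra R L] [LieRing M] [LieAlgebra R M]

noncomputable def quotientMk (I : LieIdeal R L) : L →ₗ⁅R⁆ L ⧸ I :=
  { I.toSubmodule.mkQ with
    map_lie' := fun {x y} => LieSubmodule.Quotient.mk_bracket I x y }

lemma quotientMk_eq_zero_iff (I : LieIdeal R L) {x : L} : quotientMk I x = 0 ↔ x ∈ I :=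
  LieSubmodule.Quotient.mk_eq_zero'

noncomputable def quotientLift (I : LieIdeal R L) (f : L →ₗ⁅R⁆ M) (h : I ≤ f.ker) :
    L ⧸ I →ₗ⁅R⁆ M :=
  { I.toSubmodule.liftQ f.toLinearMap fun z hz => LieHom.mem_ker.mp (h hz) with
    map_lie' := fun {x y} => by
      obtain ⟨x, rfl⟩ := LieSubmodule.Quotient.surjective_mk' I x
      obtain ⟨y, rfl⟩ := LieSubmodule.Quotient.surjective_mk' I y
      exact f.map_lie x y }

end LieIdeal

namespace LieSubalgebra

variable {R L : Type*} [CommRing R] [LieRing L] [LieAlgebra R L]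

lemma lie_mem_lieSpan_of_forall_lie_mem {t : Set L} {x : L}
    (hx : ∀ g ∈ t, ⁅x, g⁆ ∈ lieSpan R L t) {y : L} (hy : y ∈ lieSpan R L t) :
    ⁅x, y⁆ ∈ lieSpan R L t := by
  induction hy using lieSpan_induction with
  | mem g hg => exact hx g hg
  | zero => simp
  | add _ _ _ _ h₁ h₂ => rw [lie_add]; exact add_mem h₁ h₂
  | smul r _ _ h => rw [lie_smul]; exact SMulMemClass.smul_mem r h
  | lie y₁ y₂ hy₁ hy₂ h₁ h₂ =>
    rw [leibniz_lie]
    exact add_mem (lie_mem _ h₁ hy₂) (lie_mem _ hy₁ h₂)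

lemma exists_lieIdeal_coe_eq_of_lieSpan_eq_top {S : Set L} (hS : lieSpan R L S = ⊤)
    (K : LieSubalgebra R L) (hK : ∀ s ∈ S, ∀ y ∈ K, ⁅s, y⁆ ∈ K) :
    ∃ I : LieIdeal R L, ↑I = K := by
  rw [exists_lieIdeal_coe_eq_iff]
  intro x
  have hx : x ∈ lieSpan R L S := hS ▸ mem_top x
  induction hx using lieSpan_induction with
  | mem s hs => exact hK s hs
  | zero => simp
  | add _ _ _ _ h₁ h₂ => intro y hy; rw [add_lie]; exact add_mem (h₁ y hy) (h₂ y hy)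
  | smul r _ _ h => intro y hy; rw [smul_lie]; exact SMulMemClass.smul_mem r (h y hy)
  | lie x₁ x₂ _ _ h₁ h₂ =>
    intro y hy
    rw [lie_lie]
    exact sub_mem (h₁ _ (h₂ y hy)) (h₂ _ (h₁ y hy))

end LieSubalgebra

lemma LieAlgebra.lie_mem_derivedSeries_one {R L : Type*} [CommRing R] [LieRing L]
    [LieAlgebra R L] (x y : L) : ⁅x, y⁆ ∈ LieAlgebra.derivedSeries R L 1 :=
  LieSubmodule.lie_mem_lie (LieSubmodule.mem_top x) (LieSubmodule.mem_top y)

namespace FreeLieAlgebra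

variable {R Y L : Type*} [CommRing R] [LieRing L] [LieAlgebra R L]

variable (R Y) in
lemma lieSpan_range_of : LieSubalgebra.lieSpan R (FreeLieAlgebra R Y) (Set.range (of R)) = ⊤ := by
  set K := LieSubalgebra.lieSpan R (FreeLieAlgebra R Y) (Set.range (of R))
  let toK : FreeLieAlgebra R Y →ₗ⁅R⁆ K :=
    lift R fun y => ⟨of R y, LieSubalgebra.subset_lieSpan (Set.mem_range_self y)⟩
  have h : K.incl.comp toK = LieHom.id := hom_ext fun y => by simp [toK]
  refine eq_top_iff.mpr fun u _ => ?_
  have hu : K.incl (toK u) = u := LieHom.congr_fun h u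
  rw [← hu]
  exact (toK u).2

lemma quotient_hom_ext {J : LieIdeal R (FreeLieAlgebra R Y)} {f g : FreeLieAlgebra R Y ⧸ J →ₗ⁅R⁆ L}
    (h : ∀ y, f (LieSubmodule.Quotient.mk (of R y)) = g (LieSubmodule.Quotient.mk (of R y))) :
    f = g := by
  have hcomp : f.comp J.quotientMk = g.comp J.quotientMk := hom_ext h
  ext l
  obtain ⟨u, rfl⟩ := LieSubmodule.Quotient.surjective_mk' J l
  exact LieHom.congr_fun hcomp u

lemma lieSpan_range_quotient_mk_of (J : LieIdeal R (FreeLieAlgebra R Y)) :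
    LieSubalgebra.lieSpan R (FreeLieAlgebra R Y ⧸ J)
      (Set.range fun y => LieSubmodule.Quotient.mk (N := J) (of R y)) = ⊤ := by
  have hrange : (Set.range fun y => LieSubmodule.Quotient.mk (N := J) (of R y)) =
      J.quotientMk '' Set.range (of R) := by
    rw [← Set.range_comp]; rfl
  rw [hrange, ← LieSubalgebra.map_lieSpan, lieSpan_range_of, ← LieSubalgebra.map_top,
    LieHom.range_eq_top]
  exact LieSubmodule.Quotient.surjective_mk' J

end FreeLieAlgebra

lemma IsClosedSub.exists_mem_of_pair_subset {𝒜 ℬ : Set (Set X)} (hℬ : IsClosedSub 𝒜 ℬ)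
    {A : Set X} (hA : A ∈ 𝒜) {x y : X} (hxy : ({x, y} : Set X) ⊆ A) (hx : x ∈ arrSupp ℬ)
    (hy : y ∈ arrSupp ℬ) : ∃ B ∈ ℬ, ({x, y} : Set X) ⊆ B := by
  by_cases hAℬ : A ∈ ℬ
  · exact ⟨A, hAℬ, hxy⟩
  · obtain rfl : x = y := hℬ.2 A hA hAℬ ⟨hxy (by simp), hx⟩ ⟨hxy (by simp), hy⟩
    obtain ⟨B, hB, hxB⟩ := Set.mem_sUnion.mp hx
    exact ⟨B, hB, by simpa using hxB⟩

section Arrangement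

variable {C} {𝒜 ℬ : Set (Set X)} {Rel : ∀ A : Set X, Set (FreeLieAlgebra C A)}

lemma arrMk_lie_eq_zero {x y : X} (h : ∀ A ∈ 𝒜, ¬({x, y} : Set X) ⊆ A) :
    ⁅arrMk C 𝒜 Rel (of C x), arrMk C 𝒜 Rel (of C y)⁆ = 0 := by
  rw [arrMk, ← LieSubmodule.Quotient.mk_bracket, LieSubmodule.Quotient.mk_eq_zero']
  exact LieSubmodule.subset_lieSpan (Or.inl ⟨x, y, h, rfl⟩)

lemma arrMk_inclX_eq_zero {A : Set X} (hA : A ∈ 𝒜) {r : FreeLieAlgebra C A} (hr : r ∈ Rel A) :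
    arrMk C 𝒜 Rel (inclX C A r) = 0 := by
  rw [arrMk, LieSubmodule.Quotient.mk_eq_zero']
  exact LieSubmodule.subset_lieSpan (Or.inr (Set.mem_biUnion hA ⟨r, hr, rfl⟩))

variable (𝒜 Rel) in
noncomputable def toArrLie (S : Set X) : FreeLieAlgebra C S →ₗ⁅C⁆ ArrLie C 𝒜 Rel :=
  (definingIdeal C 𝒜 Rel).quotientMk.comp (inclX C S)

lemma toArrLie_apply (S : Set X) (u : FreeLieAlgebra C S) :
    toArrLie 𝒜 Rel S u = arrMk C 𝒜 Rel (inclX C S u) := rfl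

@[simp] lemma toArrLie_of {S : Set X} (a : S) :
    toArrLie 𝒜 Rel S (of C a) = arrMk C 𝒜 Rel (of C (a : X)) := by
  simp [toArrLie_apply, inclX, arrMk]

lemma toArrLie_comp_inclSub {A S : Set X} (h : A ⊆ S) :
    (toArrLie 𝒜 Rel S).comp (inclSub C h) = toArrLie 𝒜 Rel A :=
  FreeLieAlgebra.hom_ext fun a => by simp [inclSub]

noncomputable def locToArrLie {A : Set X} (hA : A ∈ 𝒜) : LocLie C A Rel →ₗ⁅C⁆ ArrLie C 𝒜 Rel :=
  (locIdeal C A Rel).quotientLift (toArrLie 𝒜 Rel A) <| LieSubmodule.lieSpan_le.mpr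
    fun _ hr => LieHom.mem_ker.mpr (arrMk_inclX_eq_zero hA hr)

@[simp] lemma locToArrLie_locMk_of {A : Set X} (hA : A ∈ 𝒜) (a : A) :
    locToArrLie hA (locMk C A Rel (of C a)) = arrMk C 𝒜 Rel (of C (a : X)) :=
  toArrLie_of a

lemma lie_mem_lieSpan_of_replacementCond (hrep : ReplacementCond C 𝒜 Rel) {A : Set X}
    (hA : A ∈ 𝒜) (h3 : 3 ≤ A.ncard) {a : X} (ha : a ∈ A) (haB : ∃ B ∈ 𝒜, B ≠ A ∧ a ∈ B)
    {x : X} (hx : x ∈ A) :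
    ⁅arrMk C 𝒜 Rel (of C a), arrMk C 𝒜 Rel (of C x)⁆ ∈ LieSubalgebra.lieSpan C (ArrLie C 𝒜 Rel)
      {z | ∃ b ∈ A, b ≠ a ∧ z = arrMk C 𝒜 Rel (of C b)} := by
  have hloc := hrep A hA h3 a ha haB <| LieAlgebra.lie_mem_derivedSeries_one
    (locMk C A Rel (of C ⟨a, ha⟩)) (locMk C A Rel (of C ⟨x, hx⟩))
  have hspan : locToArrLie hA ⁅locMk C A Rel (of C ⟨a, ha⟩), locMk C A Rel (of C ⟨x, hx⟩)⁆ ∈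
      (LieSubalgebra.lieSpan C (LocLie C A Rel) _).map (locToArrLie hA) :=
    (LieSubalgebra.mem_map _ _ _).mpr ⟨_, hloc, rfl⟩
  rw [LieSubalgebra.map_lieSpan, LieHom.map_lie, locToArrLie_locMk_of,
    locToArrLie_locMk_of] at hspan
  refine LieSubalgebra.lieSpan_mono ?_ hspan
  rintro _ ⟨_, ⟨b, hb, rfl⟩, rfl⟩
  exact ⟨b, b.2, hb, locToArrLie_locMk_of hA b⟩

lemma subIdeal_le_ker_toArrLie (hℬ : IsClosedSub 𝒜 ℬ) :
    subIdeal C ℬ Rel ≤ (toArrLie 𝒜 Rel (arrSupp ℬ)).ker := by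
  refine LieSubmodule.lieSpan_le.mpr ?_
  rintro _ (hz | ⟨x, y, hxy, rfl⟩) <;> rw [SetLike.mem_coe, LieHom.mem_ker]
  · obtain ⟨B, hB, r, hr, rfl⟩ := Set.mem_iUnion₂.mp hz
    exact (LieHom.congr_fun (toArrLie_comp_inclSub _) r).trans
      (arrMk_inclX_eq_zero (hℬ.1 hB) hr)
  · rw [LieHom.map_lie, toArrLie_of, toArrLie_of]
    refine arrMk_lie_eq_zero fun A hA hsub => ?_
    obtain ⟨B, hB, hsubB⟩ := hℬ.exists_mem_of_pair_subset hA hsub x.2 y.2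
    exact hxy B hB hsubB

noncomputable def subToArrLie (hℬ : IsClosedSub 𝒜 ℬ) : SubLie C ℬ Rel →ₗ⁅C⁆ ArrLie C 𝒜 Rel :=
  (subIdeal C ℬ Rel).quotientLift (toArrLie 𝒜 Rel (arrSupp ℬ)) (subIdeal_le_ker_toArrLie hℬ)

@[simp] lemma subToArrLie_subMk_of (hℬ : IsClosedSub 𝒜 ℬ) (a : arrSupp ℬ) :
    subToArrLie hℬ (subMk C ℬ Rel (of C a)) = arrMk C 𝒜 Rel (of C (a : X)) :=
  toArrLie_of a

variable (𝒜 ℬ Rel) in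
noncomputable def lieSpanComplSupp : LieSubalgebra C (ArrLie C 𝒜 Rel) :=
  LieSubalgebra.lieSpan C (ArrLie C 𝒜 Rel)
    {z | ∃ x : X, x ∉ arrSupp ℬ ∧ z = arrMk C 𝒜 Rel (of C x)}

lemma arrMk_of_mem_lieSpanComplSupp {x : X} (hx : x ∉ arrSupp ℬ) :
    arrMk C 𝒜 Rel (of C x) ∈ lieSpanComplSupp 𝒜 ℬ Rel :=
  LieSubalgebra.subset_lieSpan ⟨x, hx, rfl⟩

lemma lie_arrMk_of_mem_lieSpanComplSupp (h𝒜 : ∀ A ∈ 𝒜, 2 ≤ A.ncard)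
    (hrep : ReplacementCond C 𝒜 Rel) (hℬ : IsClosedSub 𝒜 ℬ)
    (hno2 : ¬∃ A ∈ 𝒜, A.ncard = 2 ∧ (A ∩ arrSupp ℬ).ncard = 1) (y : X) {x : X}
    (hx : x ∉ arrSupp ℬ) :
    ⁅arrMk C 𝒜 Rel (of C y), arrMk C 𝒜 Rel (of C x)⁆ ∈ lieSpanComplSupp 𝒜 ℬ Rel := by
  by_cases hy : y ∉ arrSupp ℬ
  · exact LieSubalgebra.lie_mem _ (arrMk_of_mem_lieSpanComplSupp hy)
      (arrMk_of_mem_lieSpanComplSupp hx)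
  rw [not_not] at hy
  by_cases hpair : ∃ A ∈ 𝒜, ({y, x} : Set X) ⊆ A
  swap
  · rw [arrMk_lie_eq_zero fun A hA hsub => hpair ⟨A, hA, hsub⟩]
    exact zero_mem _
  obtain ⟨A, hA, hsub⟩ := hpair
  have hyA : y ∈ A := hsub (by simp)
  have hAℬ : A ∉ ℬ := fun hAℬ => hx (Set.mem_sUnion_of_mem (hsub (by simp)) hAℬ)
  have hAsupp : A ∩ arrSupp ℬ = {y} := (hℬ.2 A hA hAℬ).eq_singleton_of_mem ⟨hyA, hy⟩
  have h3 : 3 ≤ A.ncard := by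
    have hne : A.ncard ≠ 2 := fun h2 => hno2 ⟨A, hA, h2, by rw [hAsupp, Set.ncard_singleton]⟩
    have := h𝒜 A hA
    omega
  obtain ⟨B, hB, hyB⟩ := Set.mem_sUnion.mp hy
  have hBA : B ≠ A := by rintro rfl; exact hAℬ hB
  refine LieSubalgebra.lieSpan_mono ?_
    (lie_mem_lieSpan_of_replacementCond hrep hA h3 hyA ⟨B, hℬ.1 hB, hBA, hyB⟩ (hsub (by simp)))
  rintro _ ⟨b, hbA, hby, rfl⟩
  refine ⟨b, fun hb => hby ?_, rfl⟩
  have hb' : b ∈ A ∩ arrSupp ℬ := ⟨hbA, hb⟩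
  rwa [hAsupp] at hb'

lemma exists_lieIdeal_coe_eq_lieSpanComplSupp (h𝒜 : ∀ A ∈ 𝒜, 2 ≤ A.ncard)
    (hrep : ReplacementCond C 𝒜 Rel) (hℬ : IsClosedSub 𝒜 ℬ)
    (hno2 : ¬∃ A ∈ 𝒜, A.ncard = 2 ∧ (A ∩ arrSupp ℬ).ncard = 1) :
    ∃ I : LieIdeal C (ArrLie C 𝒜 Rel), ↑I = lieSpanComplSupp 𝒜 ℬ Rel := by
  refine LieSubalgebra.exists_lieIdeal_coe_eq_of_lieSpan_eq_top
    (FreeLieAlgebra.lieSpan_range_quotient_mk_of _) _ ?_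
  rintro _ ⟨y, rfl⟩ _ hz
  refine LieSubalgebra.lie_mem_lieSpan_of_forall_lie_mem ?_ hz
  rintro _ ⟨x, hx, rfl⟩
  exact lie_arrMk_of_mem_lieSpanComplSupp h𝒜 hrep hℬ hno2 y hx

end Arrangement

theorem statement11_general {C : Type*} [CommRing C] {X : Type*}
    (𝒜 : Set (Set X)) (Rel : ∀ A : Set X, Set (FreeLieAlgebra C A))
    (h𝒜 : IsSetArrangement 𝒜)
    (hrep : ReplacementCond C 𝒜 Rel)
    (ℬ : Set (Set X)) (hℬ : IsClosedSub 𝒜 ℬ)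
    (hno2 : ¬∃ A ∈ 𝒜, A.ncard = 2 ∧ (A ∩ arrSupp ℬ).ncard = 1)
    (πB : ArrLie C 𝒜 Rel →ₗ⁅C⁆ SubLie C ℬ Rel)
    (hπB₁ : ∀ a : arrSupp ℬ, πB (arrMk C 𝒜 Rel (of C (a : X))) = subMk C ℬ Rel (of C a))
    (hπB₂ : ∀ x : X, x ∉ arrSupp ℬ → πB (arrMk C 𝒜 Rel (of C x)) = 0) :
    (πB.ker : Set (ArrLie C 𝒜 Rel)) =
      (LieSubalgebra.lieSpan C (ArrLie C 𝒜 Rel)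
        {z | ∃ x : X, x ∉ arrSupp ℬ ∧ z = arrMk C 𝒜 Rel (of C x)} :
          Set (ArrLie C 𝒜 Rel)) := by
  obtain ⟨I, hI⟩ := exists_lieIdeal_coe_eq_lieSpanComplSupp h𝒜.1 hrep hℬ hno2
  have hsplit : (I.quotientMk.comp (subToArrLie hℬ)).comp πB = I.quotientMk := by
    refine FreeLieAlgebra.quotient_hom_ext fun y => ?_
    change I.quotientMk (subToArrLie hℬ (πB (arrMk C 𝒜 Rel (of C y)))) =
      I.quotientMk (arrMk C 𝒜 Rel (of C y))
    by_cases hy : y ∈ arrSupp ℬ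
    · rw [hπB₁ ⟨y, hy⟩, subToArrLie_subMk_of]
    · rw [hπB₂ y hy, map_zero, map_zero, eq_comm, I.quotientMk_eq_zero_iff,
        ← LieIdeal.mem_toLieSubalgebra, hI]
      exact arrMk_of_mem_lieSpanComplSupp hy
  refine subset_antisymm (fun l hl => ?_) ?_
  · change l ∈ lieSpanComplSupp 𝒜 ℬ Rel
    rw [← hI, LieIdeal.mem_toLieSubalgebra, ← I.quotientMk_eq_zero_iff, ← hsplit,
      LieHom.comp_apply, LieHom.mem_ker.mp hl, map_zero]
  · have hle : lieSpanComplSupp 𝒜 ℬ Rel ≤ πB.ker :=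
      LieSubalgebra.lieSpan_le.mpr fun _ ⟨x, hx, hz⟩ => hz ▸ hπB₂ x hx
    exact hle

/-- If `L` satisfies the replacement condition, `ℬ` is a closed sub-arrangement of `𝒜`, and
there is no `A ∈ 𝒜` with `|A| = 2` and `|A ∩ supp ℬ| = 1`, then `ker π_ℬ` equals the Lie
subalgebra of `L` generated by the images of the generators in `X \ supp ℬ`. -/
theorem statement11 {C : Type*} [CommRing C] {X : Type*} [Fintype X]
    (𝒜 : Set (Set X)) (Rel : ∀ A : Set X, Set (FreeLieAlgebra C A))
    (h𝒜 : IsSetArrangement 𝒜) (hRel : AdmissibleRel C 𝒜 Rel)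
    (hrep : ReplacementCond C 𝒜 Rel)
    (ℬ : Set (Set X)) (hℬ : IsClosedSub 𝒜 ℬ)
    (hno2 : ¬∃ A ∈ 𝒜, A.ncard = 2 ∧ (A ∩ arrSupp ℬ).ncard = 1)
    (πB : ArrLie C 𝒜 Rel →ₗ⁅C⁆ SubLie C ℬ Rel)
    (hπB₁ : ∀ a : arrSupp ℬ, πB (arrMk C 𝒜 Rel (of C (a : X))) = subMk C ℬ Rel (of C a))
    (hπB₂ : ∀ x : X, x ∉ arrSupp ℬ → πB (arrMk C 𝒜 Rel (of C x)) = 0) :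
    (πB.ker : Set (ArrLie C 𝒜 Rel)) =
      (LieSubalgebra.lieSpan C (ArrLie C 𝒜 Rel)
        {z | ∃ x : X, x ∉ arrSupp ℬ ∧ z = arrMk C 𝒜 Rel (of C x)} :
          Set (ArrLie C 𝒜 Rel)) :=
  statement11_general 𝒜 Rel h𝒜 hrep ℬ hℬ hno2 πB hπB₁ hπB₂
end

section
/- Let L be a Lie algebra of a set-arrangement 𝒜 on X and let ℬ_i and ℬ_j be disjoint closed sub-arrangements of 𝒜. If x, y ∈ supp(ℬ_i) ∩ supp(ℬ_j), then [x,y] = 0 in L. -/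
open FreeLieAlgebra

variable (C : Type*) [CommRing C] {X : Type*}

theorem IsClosedSub.mem_of_pair_subset {X : Type*} {𝒜 ℬ : Set (Set X)} (hℬ : IsClosedSub 𝒜 ℬ)
    {A : Set X} (hA : A ∈ 𝒜) {x y : X} (hxy : x ≠ y) (hx : x ∈ arrSupp ℬ) (hy : y ∈ arrSupp ℬ)
    (hsub : ({x, y} : Set X) ⊆ A) : A ∈ ℬ := by
  by_contra hAℬ
  exact hxy (hℬ.2 A hA hAℬ ⟨hsub (by simp), hx⟩ ⟨hsub (by simp), hy⟩)

theorem not_pair_subset_of_isClosedSub_of_disjoint {X : Type*} {𝒜 ℬ₁ ℬ₂ : Set (Set X)}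
    (h₁ : IsClosedSub 𝒜 ℬ₁) (h₂ : IsClosedSub 𝒜 ℬ₂) (hdisj : ℬ₁ ∩ ℬ₂ = ∅) {x y : X}
    (hxy : x ≠ y) (hx : x ∈ arrSupp ℬ₁ ∩ arrSupp ℬ₂) (hy : y ∈ arrSupp ℬ₁ ∩ arrSupp ℬ₂) :
    ∀ A ∈ 𝒜, ¬({x, y} : Set X) ⊆ A := by
  intro A hA hsub
  have hA : A ∈ ℬ₁ ∩ ℬ₂ :=
    ⟨h₁.mem_of_pair_subset hA hxy hx.1 hy.1 hsub, h₂.mem_of_pair_subset hA hxy hx.2 hy.2 hsub⟩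
  simp [hdisj] at hA

theorem arrMk_lie_of_of_eq_zero {C : Type*} [CommRing C] {X : Type*} (𝒜 : Set (Set X))
    (Rel : ∀ A : Set X, Set (FreeLieAlgebra C A)) {x y : X}
    (hxy : ∀ A ∈ 𝒜, ¬({x, y} : Set X) ⊆ A) :
    ⁅arrMk C 𝒜 Rel (of C x), arrMk C 𝒜 Rel (of C y)⁆ = 0 := by
  have hmem : ⁅of C x, of C y⁆ ∈ definingIdeal C 𝒜 Rel :=
    LieSubmodule.subset_lieSpan (Or.inl ⟨x, y, hxy, rfl⟩)
  exact (LieSubmodule.Quotient.mk_eq_zero _).mpr hmem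

theorem statement13_general {C : Type*} [CommRing C] {X : Type*}
    (𝒜 : Set (Set X)) (Rel : ∀ A : Set X, Set (FreeLieAlgebra C A))
    (ℬ₁ ℬ₂ : Set (Set X)) (h₁ : IsClosedSub 𝒜 ℬ₁) (h₂ : IsClosedSub 𝒜 ℬ₂)
    (hdisj : ℬ₁ ∩ ℬ₂ = ∅)
    (x y : X) (hx : x ∈ arrSupp ℬ₁ ∩ arrSupp ℬ₂) (hy : y ∈ arrSupp ℬ₁ ∩ arrSupp ℬ₂) :
    ⁅arrMk C 𝒜 Rel (of C x), arrMk C 𝒜 Rel (of C y)⁆ = 0 := by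
  rcases eq_or_ne x y with rfl | hxy
  · exact lie_self _
  · exact arrMk_lie_of_of_eq_zero 𝒜 Rel
      (not_pair_subset_of_isClosedSub_of_disjoint h₁ h₂ hdisj hxy hx hy)

/-- If `ℬ₁` and `ℬ₂` are disjoint closed sub-arrangements of `𝒜` and
`x, y ∈ supp ℬ₁ ∩ supp ℬ₂`, then `⁅x, y⁆ = 0` in `L`. -/
theorem statement13 {C : Type*} [CommRing C] {X : Type*} [Fintype X]
    (𝒜 : Set (Set X)) (Rel : ∀ A : Set X, Set (FreeLieAlgebra C A))
    (h𝒜 : IsSetArrangement 𝒜) (hRel : AdmissibleRel C 𝒜 Rel)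
    (ℬ₁ ℬ₂ : Set (Set X)) (h₁ : IsClosedSub 𝒜 ℬ₁) (h₂ : IsClosedSub 𝒜 ℬ₂)
    (hdisj : ℬ₁ ∩ ℬ₂ = ∅)
    (x y : X) (hx : x ∈ arrSupp ℬ₁ ∩ arrSupp ℬ₂) (hy : y ∈ arrSupp ℬ₁ ∩ arrSupp ℬ₂) :
    ⁅arrMk C 𝒜 Rel (of C x), arrMk C 𝒜 Rel (of C y)⁆ = 0 :=
  statement13_general 𝒜 Rel ℬ₁ ℬ₂ h₁ h₂ hdisj x y hx hy
end
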